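/- arXiv:2412.12455 — 2 statements merged into one kernel-verified Lean document; each statement's English description precedes it below -/
import Mathlib

section
/- Let p be a prime, q = p^e a power of p, ℓ a prime different from p, and n a positive integer divisible by neither p nor ℓ. Let γ be an integer and τ the size of the q-cyclotomic coset c_{n/q}(γ) modulo n. Then for every N ≥ 0 there is exactly one q-cyclotomic coset modulo ℓ^N n whose image under the canonical projection ℤ/ℓ^N nℤ → ℤ/nℤ equals c_{n/q}(γ) and all of whose elements are divisible by ℓ^N; moreover this coset has size τ. -/
/-- The `q`-cyclotomic coset modulo `m` containing (the class of) the integer `γ`,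
as a subset of `ZMod m`. -/
def cycCoset (q m : ℕ) (γ : ℤ) : Set (ZMod m) :=
  {x | ∃ j : ℕ, x = (γ : ZMod m) * (q : ZMod m) ^ j}

/-- `goodCoset q ℓ n N γ δ` says that the `q`-cyclotomic coset modulo `ℓ^N * n`
containing `δ` projects onto `c_{n/q}(γ)` and all of its elements are divisible
by `ℓ^N`. -/
def goodCoset (q ℓ n N : ℕ) (γ δ : ℤ) : Prop :=
  (ZMod.castHom (dvd_mul_left n (ℓ ^ N)) (ZMod n)) '' (cycCoset q (ℓ ^ N * n) δ) =
      cycCoset q n γ ∧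
    ∀ x ∈ cycCoset q (ℓ ^ N * n) δ,
      ∃ y : ℤ, (y : ZMod (ℓ ^ N * n)) = x ∧ (ℓ : ℤ) ^ N ∣ y

/-!
Write `M = ℓ^N n`. Since `ℓ^N` and `n` are coprime, two integers divisible by `ℓ^N` are congruent
modulo `M` iff they are congruent modulo `n`. So the good cosets are those of the integers `δ`
with `ℓ^N ∣ δ` whose coset modulo `n` is `c_{n/q}(γ)`. Such a `δ` exists by Bézout; two of them
differ modulo `n`, hence modulo `M`, by a power of the unit `q`, so they have the same coset; and
the period of `δ` modulo `M` equals its period modulo `n`, which is the same for all elements of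
a coset because `q` is a unit.
-/

theorem Int.exists_dvd_and_modEq {a b : ℤ} (h : IsCoprime a b) (γ : ℤ) :
    ∃ δ, a ∣ δ ∧ δ ≡ γ [ZMOD b] := by
  obtain ⟨u, v, huv⟩ := h
  refine ⟨γ * u * a, dvd_mul_left a _, Int.modEq_iff_dvd.2 ⟨γ * v, ?_⟩⟩
  linear_combination -γ * huv

theorem Int.modEq_mul_iff_modEq_of_dvd {a b x y : ℤ} (hab : IsCoprime a b)
    (hx : a ∣ x) (hy : a ∣ y) : x ≡ y [ZMOD a * b] ↔ x ≡ y [ZMOD b] := by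
  refine ⟨Int.ModEq.of_mul_left a, fun h ↦ Int.modEq_iff_dvd.2 ?_⟩
  exact hab.mul_dvd (dvd_sub hy hx) (Int.modEq_iff_dvd.1 h)

section CyclotomicCoset

variable {q m : ℕ}

theorem mem_cycCoset_self (γ : ℤ) : (γ : ZMod m) ∈ cycCoset q m γ := ⟨0, by simp⟩

theorem cycCoset_eq_of_modEq {δ γ : ℤ} (h : δ ≡ γ [ZMOD m]) :
    cycCoset q m δ = cycCoset q m γ := by
  rw [cycCoset, cycCoset, (ZMod.intCast_eq_intCast_iff δ γ m).2 h]

theorem image_castHom_cycCoset {M : ℕ} (hdvd : m ∣ M) (δ : ℤ) :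
    ZMod.castHom hdvd (ZMod m) '' cycCoset q M δ = cycCoset q m δ := by
  ext x
  constructor
  · rintro ⟨_, ⟨j, rfl⟩, rfl⟩
    exact ⟨j, by simp only [map_mul, map_pow, map_intCast, map_natCast]⟩
  · rintro ⟨j, rfl⟩
    exact ⟨_, ⟨j, rfl⟩, by simp only [map_mul, map_pow, map_intCast, map_natCast]⟩

theorem forall_mem_cycCoset_exists_dvd_iff {d δ : ℤ} (hd : d ∣ m) :
    (∀ x ∈ cycCoset q m δ, ∃ y : ℤ, (y : ZMod m) = x ∧ d ∣ y) ↔ d ∣ δ := by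
  constructor
  · intro h
    obtain ⟨y, hy, hdy⟩ := h _ (mem_cycCoset_self δ)
    have hdiff : d ∣ δ - y := hd.trans ((ZMod.intCast_eq_intCast_iff_dvd_sub y δ m).1 hy)
    simpa using dvd_add hdiff hdy
  · rintro hdδ _ ⟨j, rfl⟩
    exact ⟨δ * (q : ℤ) ^ j, by push_cast; rfl, dvd_mul_of_dvd_left hdδ _⟩

theorem goodCoset_iff {ℓ n N : ℕ} {γ δ : ℤ} :
    goodCoset q ℓ n N γ δ ↔ cycCoset q n δ = cycCoset q n γ ∧ (ℓ : ℤ) ^ N ∣ δ := by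
  rw [goodCoset, image_castHom_cycCoset, forall_mem_cycCoset_exists_dvd_iff]
  exact ⟨n, by push_cast; ring⟩

theorem cycCoset_eq_of_mem [NeZero m] (hq : IsUnit (q : ZMod m)) {δ γ : ℤ}
    (h : (δ : ZMod m) ∈ cycCoset q m γ) : cycCoset q m δ = cycCoset q m γ := by
  obtain ⟨a, ha⟩ := h
  have hper : (q : ZMod m) ^ m.totient = 1 := by
    rw [← hq.unit_spec, ← Units.val_pow_eq_pow_val, ZMod.pow_totient, Units.val_one]
  obtain ⟨k, hk⟩ := Nat.exists_eq_add_one.2 (Nat.totient_pos.2 (NeZero.pos m))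
  ext x
  constructor
  · rintro ⟨j, rfl⟩
    exact ⟨a + j, by rw [ha, pow_add, mul_assoc]⟩
  · rintro ⟨j, rfl⟩
    refine ⟨j + k * a, ?_⟩
    calc (γ : ZMod m) * q ^ j = γ * q ^ j * (q ^ m.totient) ^ a := by rw [hper, one_pow, mul_one]
      _ = γ * q ^ a * q ^ (j + k * a) := by rw [← pow_mul, hk]; ring
      _ = δ * q ^ (j + k * a) := by rw [ha]

theorem mul_pow_eq_self_iff_of_mem_cycCoset (hq : IsUnit (q : ZMod m)) {γ : ℤ} {x : ZMod m}
    (hx : x ∈ cycCoset q m γ) (t : ℕ) :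
    x * q ^ t = x ↔ (γ : ZMod m) * q ^ t = γ := by
  obtain ⟨a, rfl⟩ := hx
  rw [mul_right_comm, (hq.pow a).mul_left_inj]

end CyclotomicCoset

section Lifting

variable {q d n : ℕ} {δ : ℤ}

theorem cycCoset_mul_eq_of_cycCoset_eq [NeZero (d * n)] (hdn : IsCoprime (d : ℤ) n)
    (hq : IsUnit (q : ZMod (d * n))) {δ' : ℤ} (hδ : (d : ℤ) ∣ δ) (hδ' : (d : ℤ) ∣ δ')
    (h : cycCoset q n δ = cycCoset q n δ') : cycCoset q (d * n) δ = cycCoset q (d * n) δ' := by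
  obtain ⟨a, ha⟩ : (δ : ZMod n) ∈ cycCoset q n δ' := h ▸ mem_cycCoset_self δ
  apply cycCoset_eq_of_mem hq ⟨a, ?_⟩
  have hmod : δ ≡ δ' * q ^ a [ZMOD n] := by
    rw [← ZMod.intCast_eq_intCast_iff]
    push_cast
    exact ha
  rw [← Int.modEq_mul_iff_modEq_of_dvd hdn hδ (dvd_mul_of_dvd_left hδ' _), ← Nat.cast_mul,
    ← ZMod.intCast_eq_intCast_iff] at hmod
  push_cast at hmod
  exact hmod

theorem setOf_mul_pow_modEq_self_eq (hdn : IsCoprime (d : ℤ) n) (hq : IsUnit (q : ZMod n))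
    {γ : ℤ} (hδ : (d : ℤ) ∣ δ) (h : cycCoset q n δ = cycCoset q n γ) :
    {t : ℕ | 0 < t ∧ δ * (q : ℤ) ^ t ≡ δ [ZMOD ((d * n : ℕ) : ℤ)]} =
      {t : ℕ | 0 < t ∧ γ * (q : ℤ) ^ t ≡ γ [ZMOD (n : ℤ)]} := by
  ext t
  refine and_congr_right fun _ ↦ ?_
  rw [Nat.cast_mul, Int.modEq_mul_iff_modEq_of_dvd hdn (dvd_mul_of_dvd_left hδ _) hδ,
    ← ZMod.intCast_eq_intCast_iff, ← ZMod.intCast_eq_intCast_iff]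
  push_cast
  exact mul_pow_eq_self_iff_of_mem_cycCoset hq (h ▸ mem_cycCoset_self δ) t

end Lifting

theorem stmt_11_general (p e q ℓ n : ℕ) (hp : p.Prime) (hq : q = p ^ e)
    (hℓ : ℓ.Prime) (hℓp : ℓ ≠ p)
    (hn : 0 < n) (hnp : ¬ p ∣ n) (hnℓ : ¬ ℓ ∣ n)
    (γ : ℤ) (τ : ℕ)
    (hτ : IsLeast {t : ℕ | 0 < t ∧ γ * (q : ℤ) ^ t ≡ γ [ZMOD (n : ℤ)]} τ) :
    ∀ N : ℕ,
      (∃ δ : ℤ, goodCoset q ℓ n N γ δ) ∧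
      (∀ δ₁ δ₂ : ℤ, goodCoset q ℓ n N γ δ₁ → goodCoset q ℓ n N γ δ₂ →
        cycCoset q (ℓ ^ N * n) δ₁ = cycCoset q (ℓ ^ N * n) δ₂) ∧
      (∀ δ : ℤ, goodCoset q ℓ n N γ δ →
        IsLeast {j : ℕ | 0 < j ∧ δ * (q : ℤ) ^ j ≡ δ [ZMOD ((ℓ ^ N * n : ℕ) : ℤ)]} τ) := by
  intro N
  have hℓn : IsCoprime ((ℓ ^ N : ℕ) : ℤ) n :=
    Nat.isCoprime_iff_coprime.2 ((hℓ.coprime_iff_not_dvd.2 hnℓ).pow_left N)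
  have hqn : q.Coprime n := hq ▸ (hp.coprime_iff_not_dvd.2 hnp).pow_left e
  have hqℓ : q.Coprime (ℓ ^ N) := hq ▸ (((Nat.coprime_primes hp hℓ).2 hℓp.symm).pow e N)
  have : NeZero (ℓ ^ N * n) := ⟨(Nat.mul_pos (pow_pos hℓ.pos N) hn).ne'⟩
  have hqM : IsUnit (q : ZMod (ℓ ^ N * n)) :=
    (ZMod.isUnit_iff_coprime _ _).2 (hqℓ.mul_right hqn)
  have hqn' : IsUnit (q : ZMod n) := (ZMod.isUnit_iff_coprime _ _).2 hqn
  refine ⟨?_, fun δ₁ δ₂ h₁ h₂ ↦ ?_, fun δ hδ ↦ ?_⟩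
  · obtain ⟨δ, hdvd, hmod⟩ := Int.exists_dvd_and_modEq hℓn γ
    exact ⟨δ, goodCoset_iff.2 ⟨cycCoset_eq_of_modEq hmod, by exact_mod_cast hdvd⟩⟩
  · rw [goodCoset_iff] at h₁ h₂
    exact cycCoset_mul_eq_of_cycCoset_eq hℓn hqM (by exact_mod_cast h₁.2)
      (by exact_mod_cast h₂.2) (h₁.1.trans h₂.1.symm)
  · rw [goodCoset_iff] at hδ
    rwa [setOf_mul_pow_modEq_self_eq hℓn hqn' (by exact_mod_cast hδ.2) hδ.1]

theorem stmt_11 (p e q ℓ n : ℕ) (hp : p.Prime) (he : 0 < e) (hq : q = p ^ e)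
    (hℓ : ℓ.Prime) (hℓp : ℓ ≠ p)
    (hn : 0 < n) (hnp : ¬ p ∣ n) (hnℓ : ¬ ℓ ∣ n)
    (γ : ℤ) (τ : ℕ)
    (hτ : IsLeast {t : ℕ | 0 < t ∧ γ * (q : ℤ) ^ t ≡ γ [ZMOD (n : ℤ)]} τ) :
    ∀ N : ℕ,
      (∃ δ : ℤ, goodCoset q ℓ n N γ δ) ∧
      (∀ δ₁ δ₂ : ℤ, goodCoset q ℓ n N γ δ₁ → goodCoset q ℓ n N γ δ₂ →
        cycCoset q (ℓ ^ N * n) δ₁ = cycCoset q (ℓ ^ N * n) δ₂) ∧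
      (∀ δ : ℤ, goodCoset q ℓ n N γ δ →
        IsLeast {j : ℕ | 0 < j ∧ δ * (q : ℤ) ^ j ≡ δ [ZMOD ((ℓ ^ N * n : ℕ) : ℤ)]} τ) :=
  stmt_11_general p e q ℓ n hp hq hℓ hℓp hn hnp hnℓ γ τ hτ
end

section
/- Let p be a prime, q = p^e a power of p, ℓ an odd prime different from p, and n a positive integer divisible by neither p nor ℓ. Let γ be an integer, τ the least positive integer with γ·q^τ ≡ γ (mod n), and assume ℓ does not divide q^τ − 1; set ρ = ord_ℓ(q^τ) and v' = v_ℓ(q^{τρ} − 1). Then for every nonzero integer δ with δ ≡ γ (mod n) and every N ≥ 1, the size of the q-cyclotomic coset modulo ℓ^N n containing δ equals τ if v_ℓ(δ) ≥ N, and equals τ·ρ·ℓ^{max(0, N − v_ℓ(δ) − v')} if v_ℓ(δ) < N. -/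
/-!
Write `v = v_ℓ(δ)`. Since `ℓ^N` and `n` are coprime, `δ q^j ≡ δ (mod ℓ^N n)` splits into
`δ q^j ≡ δ (mod n)`, i.e. `τ ∣ j` (the coset modulo `n` only depends on `δ mod n`), and
`ℓ^(N - v) ∣ q^j - 1`. The second condition is vacuous when `N ≤ v`. Otherwise, writing `j = τ k`
and `x = q^τ`, it says that `k` is a multiple of the order of `x` modulo `ℓ^(N - v)`; that order
is `ρ ℓ^(N - v - v')`, because `ℓ ∣ x^k - 1` forces `ρ ∣ k` and, for `k = ρ k'`, lifting the
exponent gives `v_ℓ(x^(ρ k') - 1) = v' + v_ℓ(k')`.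
-/

open Function

lemma isLeast_of_forall_iff_dvd {P : ℕ → Prop} {d : ℕ} (hd : 0 < d) (h : ∀ j, P j ↔ d ∣ j) :
    IsLeast {j | 0 < j ∧ P j} d :=
  ⟨⟨hd, (h d).2 dvd_rfl⟩, fun _ ⟨hj, hPj⟩ => Nat.le_of_dvd hj ((h _).1 hPj)⟩

lemma Function.minimalPeriod_eq_of_isLeast {α : Type*} {f : α → α} {x : α} {τ : ℕ}
    (hτ : IsLeast {t | 0 < t ∧ IsPeriodicPt f t x} τ) : minimalPeriod f x = τ :=
  (hτ.1.2.minimalPeriod_le hτ.1.1).antisymm <|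
    hτ.2 ⟨hτ.1.2.minimalPeriod_pos hτ.1.1, isPeriodicPt_minimalPeriod f x⟩

lemma mul_pow_modEq_self_iff_isPeriodicPt (a x : ℤ) (m j : ℕ) :
    a * x ^ j ≡ a [ZMOD m] ↔ IsPeriodicPt (· * (x : ZMod m)) j (a : ZMod m) := by
  rw [← ZMod.intCast_eq_intCast_iff, IsPeriodicPt, IsFixedPt, mul_right_iterate]
  push_cast
  rfl

lemma mul_pow_modEq_self_iff_dvd {a b x : ℤ} {m τ : ℕ}
    (hτ : IsLeast {t | 0 < t ∧ a * x ^ t ≡ a [ZMOD m]} τ) (hba : b ≡ a [ZMOD m]) (j : ℕ) :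
    b * x ^ j ≡ b [ZMOD m] ↔ τ ∣ j := by
  simp only [mul_pow_modEq_self_iff_isPeriodicPt] at hτ ⊢
  rw [(ZMod.intCast_eq_intCast_iff _ _ _).2 hba, isPeriodicPt_iff_minimalPeriod_dvd,
    minimalPeriod_eq_of_isLeast hτ]

lemma pow_dvd_mul_iff_pow_sub_padicValInt_dvd {ℓ : ℕ} [Fact ℓ.Prime] {a : ℤ} (ha : a ≠ 0)
    (N : ℕ) (z : ℤ) : (ℓ : ℤ) ^ N ∣ a * z ↔ (ℓ : ℤ) ^ (N - padicValInt ℓ a) ∣ z := by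
  rcases eq_or_ne z 0 with rfl | hz
  · simp
  rw [padicValInt_dvd_iff, padicValInt_dvd_iff, padicValInt.mul ha hz]
  simp only [mul_eq_zero, ha, hz, false_or]
  omega

lemma mul_pow_modEq_self_prime_pow_mul_iff {ℓ n : ℕ} [hℓ : Fact ℓ.Prime] (hℓn : ¬ ℓ ∣ n) {a : ℤ}
    (ha : a ≠ 0) (x : ℤ) (N j : ℕ) :
    a * x ^ j ≡ a [ZMOD ((ℓ ^ N * n : ℕ) : ℤ)] ↔
      a * x ^ j ≡ a [ZMOD n] ∧ (ℓ : ℤ) ^ (N - padicValInt ℓ a) ∣ x ^ j - 1 := by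
  have hcop : ((ℓ : ℤ) ^ N).natAbs.Coprime (n : ℤ).natAbs := by
    simpa [Int.natAbs_pow] using (hℓ.out.coprime_iff_not_dvd.2 hℓn).pow_left N
  rw [Nat.cast_mul, Nat.cast_pow, ← Int.modEq_and_modEq_iff_modEq_mul hcop, and_comm,
    Int.modEq_comm (n := (ℓ : ℤ) ^ N), Int.modEq_iff_dvd (n := (ℓ : ℤ) ^ N), ← mul_sub_one,
    pow_dvd_mul_iff_pow_sub_padicValInt_dvd ha]

lemma padicValInt_eq_emultiplicity {ℓ : ℕ} [Fact ℓ.Prime] {z : ℤ} (hz : z ≠ 0) :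
    (padicValInt ℓ z : ℕ∞) = emultiplicity (ℓ : ℤ) z := by
  rw [padicValInt, padicValNat_eq_emultiplicity (Int.natAbs_ne_zero.2 hz),
    Int.emultiplicity_natAbs]

lemma padicValInt_pow_sub_one {ℓ : ℕ} [hℓ : Fact ℓ.Prime] (hℓ2 : Odd ℓ) {y : ℤ}
    (hy : (ℓ : ℤ) ∣ y - 1) {k : ℕ} (hyk : y ^ k ≠ 1) :
    padicValInt ℓ (y ^ k - 1) = padicValInt ℓ (y - 1) + padicValNat ℓ k := by
  have hk : k ≠ 0 := by rintro rfl; exact hyk (pow_zero y)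
  have hy1 : y ≠ 1 := by rintro rfl; exact hyk (one_pow k)
  have hℓy : ¬ (ℓ : ℤ) ∣ y := fun h =>
    (Nat.prime_iff_prime_int.mp hℓ.out).not_dvd_one (by simpa using dvd_sub h hy)
  have key := Int.emultiplicity_pow_sub_pow hℓ.out hℓ2 (by simpa using hy) hℓy k
  rw [one_pow, ← padicValInt_eq_emultiplicity (sub_ne_zero.2 hyk),
    ← padicValInt_eq_emultiplicity (sub_ne_zero.2 hy1), ← padicValNat_eq_emultiplicity hk] at key
  exact_mod_cast key

lemma orderOf_intCast_zmod_pos {ℓ : ℕ} [hℓ : Fact ℓ.Prime] {x : ℤ} (hx : ¬ (ℓ : ℤ) ∣ x) :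
    0 < orderOf (x : ZMod ℓ) :=
  orderOf_pos_iff.2 <| isOfFinOrder_iff_pow_eq_one.2
    ⟨ℓ - 1, Nat.sub_pos_of_lt hℓ.out.one_lt,
      ZMod.pow_card_sub_one_eq_one (by rwa [Ne, ZMod.intCast_zmod_eq_zero_iff_dvd])⟩

lemma natCast_dvd_pow_sub_one_iff_orderOf_dvd (m : ℕ) (x : ℤ) (k : ℕ) :
    (m : ℤ) ∣ x ^ k - 1 ↔ orderOf (x : ZMod m) ∣ k := by
  rw [← ZMod.intCast_zmod_eq_zero_iff_dvd, orderOf_dvd_iff_pow_eq_one]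
  push_cast
  rw [sub_eq_zero]

lemma prime_pow_dvd_pow_sub_one_iff {ℓ : ℕ} [Fact ℓ.Prime] (hℓ2 : Odd ℓ) {x : ℤ}
    (hx : ¬ IsOfFinOrder x) (hℓx : ¬ (ℓ : ℤ) ∣ x) {w : ℕ} (hw : w ≠ 0) (k : ℕ) :
    (ℓ : ℤ) ^ w ∣ x ^ k - 1 ↔
      orderOf (x : ZMod ℓ) * ℓ ^ (w - padicValInt ℓ (x ^ orderOf (x : ZMod ℓ) - 1)) ∣ k := by
  set ρ := orderOf (x : ZMod ℓ)
  have hρ : ρ ≠ 0 := (orderOf_intCast_zmod_pos hℓx).ne'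
  by_cases hρk : ρ ∣ k
  swap
  · refine iff_of_false (fun h => hρk ?_) fun h => hρk (dvd_of_mul_right_dvd h)
    exact (natCast_dvd_pow_sub_one_iff_orderOf_dvd ℓ x k).1 <|
      (dvd_pow_self _ hw).trans h
  obtain ⟨k, rfl⟩ := hρk
  rw [Nat.mul_dvd_mul_iff_left (Nat.pos_of_ne_zero hρ)]
  rcases eq_or_ne k 0 with rfl | hk
  · simp
  have hxk : (x ^ ρ) ^ k ≠ 1 := fun h =>
    hx (isOfFinOrder_iff_pow_eq_one.2 ⟨ρ * k, Nat.pos_of_ne_zero (mul_ne_zero hρ hk), by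
      rwa [pow_mul]⟩)
  have hℓxρ : (ℓ : ℤ) ∣ x ^ ρ - 1 := (natCast_dvd_pow_sub_one_iff_orderOf_dvd ℓ x ρ).2 dvd_rfl
  rw [pow_mul, padicValInt_dvd_iff, padicValInt_pow_sub_one hℓ2 hℓxρ hxk,
    or_iff_right (sub_ne_zero.2 hxk), padicValNat_dvd_iff_le hk]
  omega

theorem stmt_13_general (p e q ℓ n : ℕ) (hp : p.Prime) (he : 0 < e) (hq : q = p ^ e)
    (hℓ : ℓ.Prime) (hℓ2 : ℓ ≠ 2) (hℓp : ℓ ≠ p)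
    (hnℓ : ¬ ℓ ∣ n)
    (γ : ℤ) (τ : ℕ)
    (hτ : IsLeast {t : ℕ | 0 < t ∧ γ * (q : ℤ) ^ t ≡ γ [ZMOD (n : ℤ)]} τ)
    (ρ v' : ℕ) (hρ : ρ = orderOf ((q : ZMod ℓ) ^ τ))
    (hv' : v' = padicValInt ℓ ((q : ℤ) ^ (τ * ρ) - 1)) :
    ∀ δ : ℤ, δ ≠ 0 → δ ≡ γ [ZMOD (n : ℤ)] → ∀ N : ℕ, 1 ≤ N →
      (N ≤ padicValInt ℓ δ →
        IsLeast {j : ℕ | 0 < j ∧ δ * (q : ℤ) ^ j ≡ δ [ZMOD ((ℓ ^ N * n : ℕ) : ℤ)]} τ) ∧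
      (padicValInt ℓ δ < N →
        IsLeast {j : ℕ | 0 < j ∧ δ * (q : ℤ) ^ j ≡ δ [ZMOD ((ℓ ^ N * n : ℕ) : ℤ)]}
          (τ * ρ * ℓ ^ (N - (padicValInt ℓ δ + v')))) := by
  intro δ hδ hδγ N _
  have : Fact ℓ.Prime := ⟨hℓ⟩
  have hq1 : 1 < (q : ℤ) ^ τ := by
    refine one_lt_pow₀ ?_ hτ.1.1.ne'
    subst hq
    exact_mod_cast Nat.one_lt_pow he.ne' hp.one_lt
  have hx : ¬ IsOfFinOrder ((q : ℤ) ^ τ) := fun h => by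
    obtain ⟨k, hk, hxk⟩ := isOfFinOrder_iff_pow_eq_one.1 h
    exact (one_lt_pow₀ hq1 hk.ne').ne' hxk
  have hℓq : ¬ ℓ ∣ q := hq ▸ fun h =>
    hℓp ((Nat.prime_dvd_prime_iff_eq hℓ hp).1 (hℓ.dvd_of_dvd_pow h))
  have hℓx : ¬ (ℓ : ℤ) ∣ (q : ℤ) ^ τ := by
    exact_mod_cast fun h => hℓq (hℓ.dvd_of_dvd_pow h)
  have hρ0 : 0 < ρ := by simpa [hρ] using orderOf_intCast_zmod_pos hℓx
  have hcoset (j : ℕ) : δ * (q : ℤ) ^ j ≡ δ [ZMOD ((ℓ ^ N * n : ℕ) : ℤ)] ↔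
      τ ∣ j ∧ (ℓ : ℤ) ^ (N - padicValInt ℓ δ) ∣ (q : ℤ) ^ j - 1 := by
    rw [mul_pow_modEq_self_prime_pow_mul_iff hnℓ hδ, mul_pow_modEq_self_iff_dvd hτ hδγ]
  refine ⟨fun hNv => isLeast_of_forall_iff_dvd hτ.1.1 fun j => ?_,
    fun hvN => isLeast_of_forall_iff_dvd
    (Nat.mul_pos (Nat.mul_pos hτ.1.1 hρ0) (pow_pos hℓ.pos _)) fun j => ?_⟩
  · rw [hcoset, Nat.sub_eq_zero_of_le hNv, pow_zero, and_iff_left (one_dvd _)]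
  have horder (k : ℕ) : (ℓ : ℤ) ^ (N - padicValInt ℓ δ) ∣ ((q : ℤ) ^ τ) ^ k - 1 ↔
      ρ * ℓ ^ (N - (padicValInt ℓ δ + v')) ∣ k := by
    rw [prime_pow_dvd_pow_sub_one_iff (hℓ.odd_of_ne_two hℓ2) hx hℓx (by omega)]
    simp only [Int.cast_pow, Int.cast_natCast, ← hρ, ← pow_mul, ← hv', Nat.sub_sub]
  rw [hcoset, mul_assoc τ ρ]
  constructor
  · rintro ⟨⟨k, rfl⟩, hk⟩
    rw [pow_mul, horder] at hk
    exact mul_dvd_mul_left τ hk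
  · rintro ⟨k, rfl⟩
    refine ⟨(dvd_mul_right _ _).mul_right _, ?_⟩
    rw [mul_assoc τ, pow_mul, horder]
    exact dvd_mul_right _ _

theorem stmt_13 (p e q ℓ n : ℕ) (hp : p.Prime) (he : 0 < e) (hq : q = p ^ e)
    (hℓ : ℓ.Prime) (hℓ2 : ℓ ≠ 2) (hℓp : ℓ ≠ p)
    (hn : 0 < n) (hnp : ¬ p ∣ n) (hnℓ : ¬ ℓ ∣ n)
    (γ : ℤ) (τ : ℕ)
    (hτ : IsLeast {t : ℕ | 0 < t ∧ γ * (q : ℤ) ^ t ≡ γ [ZMOD (n : ℤ)]} τ)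
    (hnd : ¬ (ℓ : ℤ) ∣ (q : ℤ) ^ τ - 1)
    (ρ v' : ℕ) (hρ : ρ = orderOf ((q : ZMod ℓ) ^ τ))
    (hv' : v' = padicValInt ℓ ((q : ℤ) ^ (τ * ρ) - 1)) :
    ∀ δ : ℤ, δ ≠ 0 → δ ≡ γ [ZMOD (n : ℤ)] → ∀ N : ℕ, 1 ≤ N →
      (N ≤ padicValInt ℓ δ →
        IsLeast {j : ℕ | 0 < j ∧ δ * (q : ℤ) ^ j ≡ δ [ZMOD ((ℓ ^ N * n : ℕ) : ℤ)]} τ) ∧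
      (padicValInt ℓ δ < N →
        IsLeast {j : ℕ | 0 < j ∧ δ * (q : ℤ) ^ j ≡ δ [ZMOD ((ℓ ^ N * n : ℕ) : ℤ)]}
          (τ * ρ * ℓ ^ (N - (padicValInt ℓ δ + v')))) :=
  stmt_13_general p e q ℓ n hp he hq hℓ hℓ2 hℓp hnℓ γ τ hτ ρ v' hρ hv'
end
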